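/- Let E_1, E_2 be complex Hilbert spaces and let A, W : E_1 → E_2 be contractions such that 1 + W A* is invertible. Then Ψ_A(W) D_A = D_{A*} (1 + W A*)^{-1} (W + A) as operators from E_1 to E_2. -/

import Mathlib

open ContinuousLinearMap Filter

set_option synthInstance.maxHeartbeats 1000000
set_option maxHeartbeats 1000000


/-- `PiLp` over complete fibers is complete. -/
instance PiLp.instCompleteSpace' (p : ENNReal) [Fact (1 ≤ p)] {ι : Type*} [Fintype ι]
    (β : ι → Type*) [∀ i, NormedAddCommGroup (β i)] [∀ i, CompleteSpace (β i)] :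
    CompleteSpace (PiLp p β) :=
  (UniformEquiv.completeSpace_iff
    { toEquiv := WithLp.equiv p (∀ i, β i)
      uniformContinuous_toFun := PiLp.uniformContinuous_ofLp p β
      uniformContinuous_invFun := PiLp.uniformContinuous_toLp p β }).mpr inferInstance

noncomputable section

variable {E₁ E₂ : Type*} [NormedAddCommGroup E₁] [InnerProductSpace ℂ E₁] [CompleteSpace E₁]
  [NormedAddCommGroup E₂] [InnerProductSpace ℂ E₂] [CompleteSpace E₂]

/-- The defect operator `D_C = (1 - C*C)^(1/2)` of a contraction `C`. -/
def defect (C : E₁ →L[ℂ] E₂) : E₁ →L[ℂ] E₁ := CFC.sqrt (1 - adjoint C ∘L C)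

/-- The defect operator `D_{C*} = (1 - C C*)^(1/2)` of a contraction `C`. -/
def defectStar (C : E₁ →L[ℂ] E₂) : E₂ →L[ℂ] E₂ := CFC.sqrt (1 - C ∘L adjoint C)

/-- The fractional transform `Ψ_A(W) = A + D_{A*} (1 + W A*)⁻¹ W D_A`. -/
def Psi (A W : E₁ →L[ℂ] E₂) : E₁ →L[ℂ] E₂ :=
  A + defectStar A ∘L Ring.inverse (1 + W ∘L adjoint A) ∘L (W ∘L defect A)

/-- The defect space `𝒟_C = closure (D_C E₁)`. -/
def defectSpace (C : E₁ →L[ℂ] E₂) : Submodule ℂ E₁ :=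
  (LinearMap.range (defect C : E₁ →ₗ[ℂ] E₁)).topologicalClosure

/-- The defect space `𝒟_{C*} = closure (D_{C*} E₂)`. -/
def defectStarSpace (C : E₁ →L[ℂ] E₂) : Submodule ℂ E₂ :=
  (LinearMap.range (defectStar C : E₂ →ₗ[ℂ] E₂)).topologicalClosure

theorem mem_defectSpace (C : E₁ →L[ℂ] E₂) (x : E₁) : defect C x ∈ defectSpace C :=
  Submodule.le_topologicalClosure _ (LinearMap.mem_range_self (defect C : E₁ →ₗ[ℂ] E₁) x)

theorem mem_defectStarSpace (C : E₁ →L[ℂ] E₂) (y : E₂) : defectStar C y ∈ defectStarSpace C :=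
  Submodule.le_topologicalClosure _ (LinearMap.mem_range_self (defectStar C : E₂ →ₗ[ℂ] E₂) y)

variable {H : Type*} [NormedAddCommGroup H] [InnerProductSpace ℂ H] [CompleteSpace H] {n : ℕ}

/-- `H^n` with its Hilbert space (ℓ²) structure. -/
abbrev Hn (H : Type*) (n : ℕ) : Type _ := PiLp 2 (fun _ : Fin n => H)

/-- The `i`-th coordinate projection `H^n → H`. -/
def projL (i : Fin n) : Hn H n →L[ℂ] H :=
  ContinuousLinearMap.proj i ∘L
    (PiLp.continuousLinearEquiv 2 ℂ (fun _ : Fin n => H)).toContinuousLinearMap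

/-- The `i`-th coordinate inclusion `H → H^n`. -/
def inclL (i : Fin n) : H →L[ℂ] Hn H n :=
  (PiLp.continuousLinearEquiv 2 ℂ (fun _ : Fin n => H)).symm.toContinuousLinearMap ∘L
    ContinuousLinearMap.pi (fun j => if j = i then ContinuousLinearMap.id ℂ H else 0)

/-- The row operator `H^n → H` associated to an `n`-tuple of operators. -/
def rowOp (T : Fin n → H →L[ℂ] H) : Hn H n →L[ℂ] H := ∑ i, T i ∘L projL i

/-- The row operator `H^n → H`, `(x_1, …, x_n) ↦ Σ z_i x_i`, associated with `z ∈ ℂⁿ`. -/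
def rowC (z : EuclideanSpace ℂ (Fin n)) : Hn H n →L[ℂ] H := ∑ i, z i • projL i

/-- The completely positive map `ρ_T(X) = Σ T_i X T_i^*`. -/
def rho (T : Fin n → H →L[ℂ] H) (X : H →L[ℂ] H) : H →L[ℂ] H :=
  ∑ i, T i ∘L X ∘L adjoint (T i)

/-- The components of a row operator `R : H^n → H`: `R_i = R ∘ ι_i`. -/
def comps (R : Hn H n →L[ℂ] H) : Fin n → H →L[ℂ] H := fun i => R ∘L inclL i

/-- `φ_λ(T) = Ψ_𝛌(−T)` for a tuple `T` and `λ ∈ 𝔹ⁿ`. -/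
def phiOp (lam : EuclideanSpace ℂ (Fin n)) (T : Fin n → H →L[ℂ] H) : Hn H n →L[ℂ] H :=
  Psi (rowC lam) (-(rowOp T))

/-- The full-space characteristic function
`Θ_R(z) = -R + D_{R*} (1 - 𝐳 R*)⁻¹ 𝐳 D_R : H^n → H` of a row contraction `R`. -/
def Theta (R : Hn H n →L[ℂ] H) (z : EuclideanSpace ℂ (Fin n)) : Hn H n →L[ℂ] H :=
  -R + defectStar R ∘L Ring.inverse (1 - rowC z ∘L adjoint R) ∘L (rowC z ∘L defect R)

/-- The involutive automorphism `φ_λ` of the unit ball `𝔹ⁿ`: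
`φ_λ(z) = λ - s_λ (1 - ⟨z,λ⟩)⁻¹ (z - (1 - s_λ) P_λ z)`, where `⟨z,λ⟩ = Σ z_i conj λ_i`,
`s_λ = (1 - |λ|²)^(1/2)` and `P_λ` is the projection onto the span of `λ` (`P_0 = 0`). -/
def ballAut (lam z : EuclideanSpace ℂ (Fin n)) : EuclideanSpace ℂ (Fin n) :=
  lam - ((Real.sqrt (1 - ‖lam‖ ^ 2) : ℂ) * (1 - (inner ℂ lam z : ℂ))⁻¹) •
    (z - ((1 : ℂ) - (Real.sqrt (1 - ‖lam‖ ^ 2) : ℂ)) •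
      (((inner ℂ lam z : ℂ) / ((‖lam‖ : ℂ) ^ 2)) • lam))



/-- An operator commuting with a self-adjoint operator `a` commutes with `cfc f a`. -/
lemma my_commute_cfc (f : ℝ → ℝ) {a b : H →L[ℂ] H} (ha : IsSelfAdjoint a)
    (hab : Commute b a) : Commute b (cfc f a) := by
  by_cases hf : ContinuousOn f (spectrum ℝ a)
  · rw [cfc_apply f a ha hf]
    have key : ∀ g : C(spectrum ℝ a, ℝ), Commute b (cfcHom ha g) := by
      intro g
      induction g using ContinuousMap.induction_on_of_compact with
      | const r =>
        rw [show (ContinuousMap.const (spectrum ℝ a) r) = algebraMap ℝ C(spectrum ℝ a, ℝ) r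
          from rfl, AlgHomClass.commutes]
        exact (Algebra.commutes r b).symm
      | id => rw [cfcHom_id ha]; exact hab
      | star_id => rw [map_star, cfcHom_id ha, ha.star_eq]; exact hab
      | add f g hf hg => rw [map_add]; exact hf.add_right hg
      | mul f g hf hg => rw [map_mul]; exact hf.mul_right hg
      | frequently f hf =>
        have hcl : IsClosed {g : C(spectrum ℝ a, ℝ) | Commute b (cfcHom ha g)} :=
          isClosed_eq (continuous_const.mul (cfcHom_continuous ha))
            ((cfcHom_continuous ha).mul continuous_const)
        exact hcl.closure_subset (hf.mem_closure)
    exact key _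
  · rw [cfc_apply_of_not_continuousOn a hf]; exact Commute.zero_right b

/-- An operator commuting with a nonnegative operator `a` commutes with `CFC.sqrt a`. -/
lemma my_commute_sqrt {a b : H →L[ℂ] H} (ha : 0 ≤ a) (hab : Commute b a) :
    Commute b (CFC.sqrt a) := by
  rw [CFC.sqrt_eq_cfc, cfc_nnreal_eq_real NNReal.sqrt a ha]
  exact my_commute_cfc _ (IsSelfAdjoint.of_nonneg ha) hab

/-- For a contraction `C`, the operator `1 - C* C` is nonnegative. -/
lemma my_one_sub_nonneg (C : E₁ →L[ℂ] E₂) (h : ∀ x, ‖C x‖ ≤ ‖x‖) :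
    0 ≤ 1 - adjoint C ∘L C := by
  rw [nonneg_iff_isPositive, isPositive_def']
  constructor
  · rw [isSelfAdjoint_iff']
    rw [map_sub, adjoint_comp, adjoint_adjoint]
    congr 1
    rw [show (1 : E₁ →L[ℂ] E₁) = ContinuousLinearMap.id ℂ E₁ from rfl, adjoint_id]
  · intro x
    have key : reApplyInnerSelf (1 - adjoint C ∘L C) x = ‖x‖ ^ 2 - ‖C x‖ ^ 2 := by
      simp only [reApplyInnerSelf_apply, sub_apply, ContinuousLinearMap.one_apply, comp_apply, inner_sub_left,
        adjoint_inner_left, map_sub]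
      rw [← inner_self_eq_norm_sq (𝕜 := ℂ) x, ← inner_self_eq_norm_sq (𝕜 := ℂ) (C x)]
    rw [key]
    have := h x
    nlinarith [norm_nonneg (C x), norm_nonneg x]

/-- The block operator `[[0, A*],[A, 0]]` on `E₁ ⊕₂ E₂`. -/
def myN (A : E₁ →L[ℂ] E₂) : WithLp 2 (E₁ × E₂) →L[ℂ] WithLp 2 (E₁ × E₂) :=
  (WithLp.prodContinuousLinearEquiv 2 ℂ E₁ E₂).symm.toContinuousLinearMap ∘L
    (((adjoint A) ∘L ContinuousLinearMap.snd ℂ E₁ E₂).prod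
      (A ∘L ContinuousLinearMap.fst ℂ E₁ E₂)) ∘L
    (WithLp.prodContinuousLinearEquiv 2 ℂ E₁ E₂).toContinuousLinearMap

lemma myN_apply (A : E₁ →L[ℂ] E₂) (u : WithLp 2 (E₁ × E₂)) :
    myN A u = (WithLp.equiv 2 (E₁ × E₂)).symm (adjoint A u.snd, A u.fst) := rfl

/-- The block diagonal operator `[[D_A, 0],[0, D_{A*}]]` on `E₁ ⊕₂ E₂`. -/
def myS (A : E₁ →L[ℂ] E₂) : WithLp 2 (E₁ × E₂) →L[ℂ] WithLp 2 (E₁ × E₂) :=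
  (WithLp.prodContinuousLinearEquiv 2 ℂ E₁ E₂).symm.toContinuousLinearMap ∘L
    ((defect A ∘L ContinuousLinearMap.fst ℂ E₁ E₂).prod
      (defectStar A ∘L ContinuousLinearMap.snd ℂ E₁ E₂)) ∘L
    (WithLp.prodContinuousLinearEquiv 2 ℂ E₁ E₂).toContinuousLinearMap

lemma myS_apply (A : E₁ →L[ℂ] E₂) (u : WithLp 2 (E₁ × E₂)) :
    myS A u = (WithLp.equiv 2 (E₁ × E₂)).symm (defect A u.fst, defectStar A u.snd) := rfl

/-- The intertwining relation `A D_A = D_{A*} A` for a contraction `A`. -/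
lemma my_intertwine (A : E₁ →L[ℂ] E₂) (hA : ‖A‖ ≤ 1) :
    A ∘L defect A = defectStar A ∘L A := by
  have hcontr : ∀ x : E₁, ‖A x‖ ≤ ‖x‖ := fun x => by
    calc ‖A x‖ ≤ ‖A‖ * ‖x‖ := A.le_opNorm x
    _ ≤ 1 * ‖x‖ := mul_le_mul_of_nonneg_right hA (norm_nonneg x)
    _ = ‖x‖ := one_mul _
  have hadjnorm : ‖adjoint A‖ ≤ 1 := by
    rw [show adjoint A = (adjoint : (E₁ →L[ℂ] E₂) ≃ₗᵢ⋆[ℂ] _) A from rfl,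
      LinearIsometryEquiv.norm_map]; exact hA
  have hcontr' : ∀ y : E₂, ‖adjoint A y‖ ≤ ‖y‖ := fun y => by
    calc ‖adjoint A y‖ ≤ ‖adjoint A‖ * ‖y‖ := (adjoint A).le_opNorm y
    _ ≤ 1 * ‖y‖ := mul_le_mul_of_nonneg_right hadjnorm (norm_nonneg y)
    _ = ‖y‖ := one_mul _
  -- N is self-adjoint
  have hNsa : IsSelfAdjoint (myN A) := by
    rw [isSelfAdjoint_iff']
    symm
    rw [eq_adjoint_iff]
    intro x y
    simp only [myN_apply]
    rw [WithLp.prod_inner_apply, WithLp.prod_inner_apply]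
    simp only [WithLp.equiv_symm_apply, WithLp.toLp_fst, WithLp.toLp_snd, WithLp.ofLp_toLp, WithLp.ofLp_fst, WithLp.ofLp_snd]
    rw [adjoint_inner_left, adjoint_inner_right]
    ring
  -- N is a contraction
  have hNcontr : ∀ u : WithLp 2 (E₁ × E₂), ‖myN A u‖ ≤ ‖u‖ := by
    intro u
    have h1 : ‖myN A u‖ ^ 2 ≤ ‖u‖ ^ 2 := by
      rw [WithLp.prod_norm_sq_eq_of_L2, WithLp.prod_norm_sq_eq_of_L2]
      simp only [myN_apply, WithLp.equiv_symm_apply, WithLp.toLp_fst, WithLp.toLp_snd, WithLp.ofLp_toLp, WithLp.ofLp_fst, WithLp.ofLp_snd]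
      have := hcontr u.fst
      have := hcontr' u.snd
      nlinarith [norm_nonneg (A u.fst), norm_nonneg (adjoint A u.snd), norm_nonneg u.fst,
        norm_nonneg u.snd]
    exact (pow_le_pow_iff_left₀ (norm_nonneg _) (norm_nonneg _) two_ne_zero).mp h1
  set N := myN A with hNdef
  set Z : WithLp 2 (E₁ × E₂) →L[ℂ] WithLp 2 (E₁ × E₂) := 1 - N * N with hZdef
  have hZnonneg : 0 ≤ Z := by
    have := my_one_sub_nonneg N hNcontr
    rwa [show adjoint N = N from isSelfAdjoint_iff'.mp hNsa, ← mul_def] at this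
  have hD₁nonneg : 0 ≤ defect A := CFC.sqrt_nonneg _
  have hD₂nonneg : 0 ≤ defectStar A := CFC.sqrt_nonneg _
  have hD₁sa : IsSelfAdjoint (defect A) := IsSelfAdjoint.of_nonneg hD₁nonneg
  have hD₂sa : IsSelfAdjoint (defectStar A) := IsSelfAdjoint.of_nonneg hD₂nonneg
  have hSnonneg : 0 ≤ myS A := by
    rw [nonneg_iff_isPositive, isPositive_def']
    constructor
    · rw [isSelfAdjoint_iff']
      symm
      rw [eq_adjoint_iff]
      intro x y
      simp only [myS_apply]
      rw [WithLp.prod_inner_apply, WithLp.prod_inner_apply]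
      simp only [WithLp.equiv_symm_apply, WithLp.toLp_fst, WithLp.toLp_snd, WithLp.ofLp_toLp, WithLp.ofLp_fst, WithLp.ofLp_snd]
      have hsym₁ : ∀ a b, (inner ℂ (defect A a) b : ℂ) = inner ℂ a (defect A b) := fun a b => by
        conv_lhs => rw [← isSelfAdjoint_iff'.mp hD₁sa]
        exact adjoint_inner_left (defect A) b a
      have hsym₂ : ∀ a b, (inner ℂ (defectStar A a) b : ℂ) = inner ℂ a (defectStar A b) := fun a b => by
        conv_lhs => rw [← isSelfAdjoint_iff'.mp hD₂sa]
        exact adjoint_inner_left (defectStar A) b a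
      rw [hsym₁ x.fst y.fst, hsym₂ x.snd y.snd]
    · intro u
      have h₁ := (nonneg_iff_isPositive _).mp hD₁nonneg |>.2 u.fst
      have h₂ := (nonneg_iff_isPositive _).mp hD₂nonneg |>.2 u.snd
      simp only [reApplyInnerSelf_apply] at h₁ h₂ ⊢
      rw [myS_apply, WithLp.prod_inner_apply]
      simp only [WithLp.equiv_symm_apply, WithLp.toLp_fst, WithLp.toLp_snd, WithLp.ofLp_toLp, WithLp.ofLp_fst, WithLp.ofLp_snd, map_add]
      exact add_nonneg h₁ h₂
  -- S * S = Z
  have hD₁sq : defect A * defect A = 1 - adjoint A ∘L A :=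
    CFC.sqrt_mul_sqrt_self _ (my_one_sub_nonneg A hcontr)
  have hD₂sq : defectStar A * defectStar A = 1 - A ∘L adjoint A := by
    have := my_one_sub_nonneg (adjoint A) hcontr'
    rw [adjoint_adjoint] at this
    exact CFC.sqrt_mul_sqrt_self _ this
  have hSS : myS A * myS A = Z := by
    refine ContinuousLinearMap.ext fun u => ?_
    have lhs : (myS A * myS A) u = (WithLp.equiv 2 (E₁ × E₂)).symm
        (defect A (defect A u.fst), defectStar A (defectStar A u.snd)) := by
      rw [mul_def, comp_apply, myS_apply, myS_apply]
      simp only [WithLp.equiv_symm_apply, WithLp.toLp_fst, WithLp.toLp_snd, WithLp.ofLp_toLp, WithLp.ofLp_fst, WithLp.ofLp_snd]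
    have rhs : Z u = (WithLp.equiv 2 (E₁ × E₂)).symm
        (u.fst - adjoint A (A u.fst), u.snd - A (adjoint A u.snd)) := by
      rw [hZdef, sub_apply, ContinuousLinearMap.one_apply, mul_def, comp_apply, myN_apply, myN_apply]
      simp only [WithLp.equiv_symm_apply, WithLp.toLp_fst, WithLp.toLp_snd, WithLp.ofLp_toLp, WithLp.ofLp_fst, WithLp.ofLp_snd]
      apply (WithLp.equiv 2 (E₁ × E₂)).injective
      ext <;> simp
    rw [lhs, rhs]
    have e₁ := DFunLike.congr_fun hD₁sq u.fst
    have e₂ := DFunLike.congr_fun hD₂sq u.snd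
    rw [ContinuousLinearMap.mul_apply] at e₁ e₂
    simp only [sub_apply, ContinuousLinearMap.one_apply, comp_apply] at e₁ e₂
    rw [e₁, e₂]
  have hsqrtZ : CFC.sqrt Z = myS A := CFC.sqrt_unique hSS hSnonneg
  have hcommZ : Commute N Z := by
    rw [hZdef]
    exact (Commute.one_right N).sub_right ((Commute.refl N).mul_right (Commute.refl N))
  have hcomm : N * myS A = myS A * N := hsqrtZ ▸ (my_commute_sqrt hZnonneg hcommZ).eq
  refine ContinuousLinearMap.ext fun x => ?_
  have := DFunLike.congr_fun hcomm ((WithLp.equiv 2 (E₁ × E₂)).symm (x, 0))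
  rw [ContinuousLinearMap.mul_apply, ContinuousLinearMap.mul_apply, myS_apply, myN_apply] at this
  simp only [WithLp.equiv_symm_apply, WithLp.toLp_fst, WithLp.toLp_snd, WithLp.ofLp_toLp, WithLp.ofLp_fst, WithLp.ofLp_snd, map_zero] at this
  rw [myN_apply, myS_apply] at this
  simp only [WithLp.equiv_symm_apply, WithLp.toLp_fst, WithLp.toLp_snd, WithLp.ofLp_toLp, WithLp.ofLp_fst, WithLp.ofLp_snd, map_zero] at this
  have h2 := congrArg (fun v => ((WithLp.equiv 2 (E₁ × E₂)) v).snd) this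
  simpa using h2


/-- `Ψ_A(W) D_A = D_{A*} (1 + WA*)⁻¹ (W + A)`. -/
theorem statement6 (A W : E₁ →L[ℂ] E₂) (hA : ‖A‖ ≤ 1) (hW : ‖W‖ ≤ 1)
    (h1 : IsUnit ((1 : E₂ →L[ℂ] E₂) + W ∘L adjoint A)) :
    Psi A W ∘L defect A = defectStar A ∘L (Ring.inverse (1 + W ∘L adjoint A) ∘L (W + A)) := by
  have hcontr : ∀ x : E₁, ‖A x‖ ≤ ‖x‖ := fun x => by
    calc ‖A x‖ ≤ ‖A‖ * ‖x‖ := A.le_opNorm x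
    _ ≤ 1 * ‖x‖ := mul_le_mul_of_nonneg_right hA (norm_nonneg x)
    _ = ‖x‖ := one_mul _
  have hdefect_sq : defect A ∘L defect A = 1 - adjoint A ∘L A := by
    rw [← mul_def]
    exact CFC.sqrt_mul_sqrt_self _ (my_one_sub_nonneg A hcontr)
  set U : E₂ →L[ℂ] E₂ := 1 + W ∘L adjoint A with hU
  set R : E₂ →L[ℂ] E₂ := Ring.inverse U with hR
  have hRU : R ∘L U = 1 := by rw [← mul_def, hR]; exact Ring.inverse_mul_cancel U h1
  have key : A + R ∘L (W ∘L (1 - adjoint A ∘L A)) = R ∘L (W + A) := by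
    have hUA : U ∘L A = A + W ∘L (adjoint A ∘L A) := by
      rw [hU, add_comp, one_def, id_comp, comp_assoc]
    have hWA : W + A = W ∘L (1 - adjoint A ∘L A) + U ∘L A := by
      have hW1 : W ∘L (1 : E₁ →L[ℂ] E₁) = W := by rw [one_def, comp_id]
      rw [hUA, comp_sub, hW1]
      abel
    have hRUA : R ∘L (U ∘L A) = A := by
      rw [← comp_assoc R U A, hRU, one_def, id_comp]
    rw [hWA, comp_add, hRUA, add_comm]
  calc Psi A W ∘L defect A
      = A ∘L defect A + defectStar A ∘L (R ∘L (W ∘L (defect A ∘L defect A))) := by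
        rw [Psi, add_comp]
        simp only [comp_assoc]
        rfl
    _ = defectStar A ∘L (A + R ∘L (W ∘L (1 - adjoint A ∘L A))) := by
        rw [my_intertwine A hA, hdefect_sq, comp_add]
    _ = defectStar A ∘L (R ∘L (W + A)) := by rw [key]


end
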